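/- Let n ∈ ℕ and κ > 0, and define δ_t by δ_0 = 0, δ_{t+1} = v + P·δ_t, where P is the lazy reflecting walk transition matrix on the path with n vertices and v = (κ, 0, ..., 0, κ)^T. Then there is an absolute constant c₂ > 0 such that δ_{i,t} ≤ c₂·κ·√t for all i and all t ≤ n². -/

import Mathlib

/-!
Comparison with a supersolution. Since `P` has nonnegative entries, every `f` with `δ₀ ≤ f₀` and
`v + P f_s ≤ f_{s+1}` dominates `δ`. Take `f_s = κ Φ_{√(s+1)}` with
`Φ_r(x) = ψ_r(x) + ψ_r(n - 1 - x)` and `ψ_r(x) = 2 (r - x)₊² / r + 4 r`. Averaging over a step of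
the walk raises `ψ_r` by at most `4 / (3 r)`, because the second difference of `(r - x)₊²` is at
most `2`, and raising `r²` by one raises `ψ_r` by at least as much. At an endpoint the walk
stays put instead of stepping to `-1` or `n`, and the drop `Φ_r(-1) - Φ_r(0) ≥ 4` absorbs the
injected `κ` as long as `r ≤ n`, i.e. `s < n²`. Finally `Φ_r ≤ 12 r`.
-/

open Matrix

noncomputable def edgeBarrier (r x : ℝ) : ℝ := 2 * max (r - x) 0 ^ 2 / r + 4 * r

noncomputable def pathBarrier (N r x : ℝ) : ℝ := edgeBarrier r x + edgeBarrier r (N - 1 - x)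

section Barrier

variable {N r r' x : ℝ}

lemma edgeBarrier_nonneg (hr : 0 ≤ r) : 0 ≤ edgeBarrier r x := by
  unfold edgeBarrier; positivity

lemma edgeBarrier_le (hr : 0 < r) (hx : 0 ≤ x) : edgeBarrier r x ≤ 6 * r := by
  have hmax : max (r - x) 0 ≤ r := max_le (by linarith) hr.le
  have : 2 * max (r - x) 0 ^ 2 / r ≤ 2 * r := by
    rw [div_le_iff₀ hr]; nlinarith [le_max_right (r - x) 0]
  unfold edgeBarrier; linarith

lemma sq_max_add_one_add_sq_max_sub_one_le (u : ℝ) :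
    max (u + 1) 0 ^ 2 + max (u - 1) 0 ^ 2 ≤ 2 * max u 0 ^ 2 + 2 := by
  rcases le_total u (-1) with h | h
  · rw [max_eq_right (by linarith), max_eq_right (by linarith), max_eq_right (by linarith)]
    norm_num
  rcases le_total u 0 with h' | h'
  · rw [max_eq_left (by linarith), max_eq_right (by linarith), max_eq_right h']
    nlinarith
  rcases le_total u 1 with h'' | h''
  · rw [max_eq_left (by linarith), max_eq_right (by linarith), max_eq_left h']
    nlinarith
  · rw [max_eq_left (by linarith), max_eq_left (by linarith), max_eq_left h']
    nlinarith

lemma edgeBarrier_sub_one_add_edgeBarrier_add_one_le (hr : 0 < r) :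
    edgeBarrier r (x - 1) + edgeBarrier r (x + 1) ≤ 2 * edgeBarrier r x + 4 / r := by
  have key := sq_max_add_one_add_sq_max_sub_one_le (r - x)
  rw [show r - x + 1 = r - (x - 1) by ring, show r - x - 1 = r - (x + 1) by ring] at key
  have : 2 * max (r - (x - 1)) 0 ^ 2 / r + 2 * max (r - (x + 1)) 0 ^ 2 / r
      ≤ 2 * (2 * max (r - x) 0 ^ 2 / r) + 4 / r := by
    rw [← add_div, ← mul_div_assoc, ← add_div, div_le_div_iff_of_pos_right hr]
    linarith
  unfold edgeBarrier; linarith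

lemma edgeBarrier_add_le_of_le (hr : 0 < r) (hrr' : r ≤ r') (hx : 0 ≤ x) :
    edgeBarrier r x + 4 * (r' - r) ≤ edgeBarrier r' x := by
  have hr' : 0 < r' := hr.trans_le hrr'
  have hsq : max (r - x) 0 ^ 2 / r ≤ max (r' - x) 0 ^ 2 / r' := by
    rcases le_total r x with h | h
    · rw [max_eq_right (by linarith), zero_pow two_ne_zero, zero_div]; positivity
    rw [max_eq_left (by linarith), max_eq_left (by linarith), div_le_div_iff₀ hr hr']
    nlinarith [mul_nonneg (sub_nonneg.2 hrr') (sub_nonneg.2 (by nlinarith : x ^ 2 ≤ r * r'))]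
  unfold edgeBarrier
  rw [mul_div_assoc, mul_div_assoc]
  linarith

lemma edgeBarrier_add_le_of_sq_eq (hr : 1 ≤ r) (hr' : 0 ≤ r') (hrr' : r' ^ 2 = r ^ 2 + 1)
    (hx : 0 ≤ x) : edgeBarrier r x + 4 / (3 * r) ≤ edgeBarrier r' x := by
  have hle : r ≤ r' := by nlinarith
  have hgap : 4 / (3 * r) ≤ 4 * (r' - r) := by
    rw [div_le_iff₀ (by positivity)]; nlinarith
  linarith [edgeBarrier_add_le_of_le (by linarith) hle hx]

lemma edgeBarrier_neg_one (hr : 0 < r) : edgeBarrier r (-1) = edgeBarrier r 0 + 4 + 2 / r := by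
  unfold edgeBarrier
  rw [max_eq_left (by linarith), max_eq_left (by linarith)]
  field_simp
  ring

lemma edgeBarrier_le_edgeBarrier_add_one (hr : 0 < r) (hrx : r ≤ x + 1) :
    edgeBarrier r x ≤ edgeBarrier r (x + 1) + 2 / r := by
  have hmax : max (r - x) 0 ^ 2 ≤ 1 := by
    rw [sq_le_one_iff_abs_le_one, abs_le]
    exact ⟨by linarith [le_max_right (r - x) 0], max_le (by linarith) zero_le_one⟩
  have : 2 * max (r - x) 0 ^ 2 / r ≤ 2 / r := by gcongr; linarith
  unfold edgeBarrier
  rw [max_eq_right (by linarith : r - (x + 1) ≤ 0), zero_pow two_ne_zero, mul_zero, zero_div]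
  linarith

lemma pathBarrier_reflect : pathBarrier N r (N - 1 - x) = pathBarrier N r x := by
  rw [pathBarrier, pathBarrier, sub_sub_cancel, add_comm]

lemma pathBarrier_nonneg (hr : 0 ≤ r) : 0 ≤ pathBarrier N r x :=
  add_nonneg (edgeBarrier_nonneg hr) (edgeBarrier_nonneg hr)

lemma pathBarrier_le (hr : 0 < r) (hx : 0 ≤ x) (hxN : x ≤ N - 1) : pathBarrier N r x ≤ 12 * r := by
  unfold pathBarrier
  linarith [edgeBarrier_le hr hx, edgeBarrier_le hr (sub_nonneg.2 hxN : 0 ≤ N - 1 - x)]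

lemma pathBarrier_sqrt_le {t : ℝ} (ht : 1 ≤ t) (hx : 0 ≤ x) (hxN : x ≤ N - 1) :
    pathBarrier N √(t + 1) x ≤ 24 * √t := by
  have hsqrt : √(t + 1) ≤ 2 * √t := by
    rw [Real.sqrt_le_left (by positivity), mul_pow, Real.sq_sqrt (by positivity)]
    linarith
  linarith [pathBarrier_le (N := N) (Real.sqrt_pos.2 (by linarith : 0 < t + 1)) hx hxN]

lemma pathBarrier_sub_one_add_add_le (hr : 1 ≤ r) (hr' : 0 ≤ r') (hrr' : r' ^ 2 = r ^ 2 + 1)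
    (hx : 0 ≤ x) (hxN : x ≤ N - 1) :
    pathBarrier N r (x - 1) + pathBarrier N r x + pathBarrier N r (x + 1)
      ≤ 3 * pathBarrier N r' x := by
  have hr0 : 0 < r := by linarith
  have hleft := edgeBarrier_sub_one_add_edgeBarrier_add_one_le (x := x) hr0
  have hright := edgeBarrier_sub_one_add_edgeBarrier_add_one_le (x := N - 1 - x) hr0
  have hgain := edgeBarrier_add_le_of_sq_eq hr hr' hrr' hx
  have hgain' := edgeBarrier_add_le_of_sq_eq hr hr' hrr' (by linarith : 0 ≤ N - 1 - x)
  have h4 : 4 / r = 3 * (4 / (3 * r)) := by field_simp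
  unfold pathBarrier
  rw [show N - 1 - (x - 1) = N - 1 - x + 1 by ring, show N - 1 - (x + 1) = N - 1 - x - 1 by ring]
  linarith

lemma pathBarrier_zero_add_three_le (hr : 0 < r) (hrN : r ≤ N) :
    pathBarrier N r 0 + 3 ≤ pathBarrier N r (-1) := by
  have hfar := edgeBarrier_le_edgeBarrier_add_one (x := N - 1) hr (by linarith)
  unfold pathBarrier
  rw [edgeBarrier_neg_one hr, sub_zero, show N - 1 - -1 = N - 1 + 1 by ring]
  linarith

lemma pathBarrier_last_add_three_le (hr : 0 < r) (hrN : r ≤ N) :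
    pathBarrier N r (N - 1) + 3 ≤ pathBarrier N r N := by
  have hlast : pathBarrier N r (N - 1) = pathBarrier N r 0 := by
    rw [← sub_zero (N - 1), pathBarrier_reflect]
  have hout : pathBarrier N r N = pathBarrier N r (-1) := by
    rw [← pathBarrier_reflect (x := -1), sub_neg_eq_add, sub_add_cancel]
  rw [hlast, hout]
  exact pathBarrier_zero_add_three_le hr hrN

end Barrier

lemma le_of_supersolution {ι α : Type*} [Fintype ι] [Semiring α] [PartialOrder α]
    [IsOrderedRing α] {P : Matrix ι ι α} (hP : ∀ i j, 0 ≤ P i j) {v : ι → α} {x f : ℕ → ι → α}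
    (hx : ∀ s, x (s + 1) = v + P *ᵥ x s) (h0 : x 0 ≤ f 0) {T : ℕ}
    (hf : ∀ s < T, v + P *ᵥ f s ≤ f (s + 1)) : ∀ s ≤ T, x s ≤ f s := by
  intro s
  induction s with
  | zero => exact fun _ => h0
  | succ s ih =>
    intro hs
    rw [hx]
    refine le_trans (add_le_add_right (fun i => ?_) v) (hf s hs)
    exact dotProduct_le_dotProduct_of_nonneg_left (ih (by omega)) (hP i)

def lazyPathWalk (α : Type*) [DivisionRing α] (n : ℕ) : Matrix (Fin n) (Fin n) α :=
  Matrix.of fun i j =>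
    if ((i : ℕ) = 0 ∧ (j : ℕ) = 0) ∨ ((i : ℕ) = n - 1 ∧ (j : ℕ) = n - 1) then 2 / 3
    else if (i : ℕ) ≤ (j : ℕ) + 1 ∧ (j : ℕ) ≤ (i : ℕ) + 1 then 1 / 3 else 0

def pathEnds (α : Type*) [Zero α] [One α] (n : ℕ) : Fin n → α :=
  fun i => if (i : ℕ) = 0 ∨ (i : ℕ) = n - 1 then 1 else 0

-- Neighbours of `i` on the path, `i` itself replacing the missing one at an end (for `pathPred`
-- this is truncated subtraction); this is how the lazy walk's holding step reflects at the ends.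
def pathPred {n : ℕ} (i : Fin n) : Fin n := ⟨i - 1, by omega⟩

def pathSucc {n : ℕ} (i : Fin n) : Fin n := ⟨min (i + 1) (n - 1), by omega⟩

section LazyPathWalk

variable {n : ℕ} {α β : Type*}

lemma map_lazyPathWalk [DivisionRing α] [DivisionRing β] (f : α →+* β) :
    (lazyPathWalk α n).map f = lazyPathWalk β n := by
  ext i j
  simp only [lazyPathWalk, map_apply, of_apply]
  split_ifs <;> simp [map_ofNat]

lemma comp_smul_pathEnds_add_lazyPathWalk_mulVec [Field α] [Field β] (f : α →+* β) (κ : α)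
    (x : Fin n → α) :
    f ∘ (κ • pathEnds α n + lazyPathWalk α n *ᵥ x)
      = f κ • pathEnds β n + lazyPathWalk β n *ᵥ (f ∘ x) := by
  ext i
  rw [Function.comp_apply, Pi.add_apply, map_add, RingHom.map_mulVec, map_lazyPathWalk]
  simp only [pathEnds, Pi.smul_apply, smul_eq_mul, Pi.add_apply]
  split_ifs <;> simp

lemma lazyPathWalk_nonneg [Field α] [LinearOrder α] [IsStrictOrderedRing α] (i j : Fin n) :
    0 ≤ lazyPathWalk α n i j := by
  simp only [lazyPathWalk, of_apply]
  split_ifs <;> positivity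

lemma lazyPathWalk_apply [Field α] (hn : 2 ≤ n) (i j : Fin n) :
    lazyPathWalk α n i j =
      ((if j = pathPred i then 1 else 0) + (if j = i then 1 else 0) +
        (if j = pathSucc i then 1 else 0)) / 3 := by
  simp only [lazyPathWalk, of_apply, pathPred, pathSucc, Fin.ext_iff]
  split_ifs <;> first | omega | ring

lemma lazyPathWalk_mulVec [Field α] (hn : 2 ≤ n) (x : Fin n → α) (i : Fin n) :
    (lazyPathWalk α n *ᵥ x) i = (x (pathPred i) + x i + x (pathSucc i)) / 3 := by
  simp only [mulVec, dotProduct, lazyPathWalk_apply hn, div_mul_eq_mul_div, add_mul, ite_mul,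
    one_mul, zero_mul, ← Finset.sum_div, Finset.sum_add_distrib, Finset.sum_ite_eq',
    Finset.mem_univ, if_true]

lemma pathEnds_add_mulVec_pathBarrier_le (hn : 2 ≤ n) {r r' : ℝ} (hr : 1 ≤ r) (hrn : r ≤ n)
    (hr' : 0 ≤ r') (hrr' : r' ^ 2 = r ^ 2 + 1) (i : Fin n) :
    pathEnds ℝ n i + (lazyPathWalk ℝ n *ᵥ fun j => pathBarrier n r j) i
      ≤ pathBarrier n r' i := by
  set Φ := pathBarrier n r
  have hi : (i : ℝ) + 1 ≤ n := by exact_mod_cast i.isLt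
  have hr0 : 0 < r := by linarith
  have hreflect : 3 * pathEnds ℝ n i + Φ (pathPred i) + Φ (pathSucc i)
      ≤ Φ ((i : ℝ) - 1) + Φ ((i : ℝ) + 1) := by
    by_cases hfirst : (i : ℕ) = 0
    · have hpred : pathPred i = i := Fin.ext (by simp only [pathPred]; omega)
      have hsucc : (pathSucc i : ℕ) = (i : ℕ) + 1 := by simp only [pathSucc]; omega
      have hends : pathEnds ℝ n i = 1 := if_pos (Or.inl hfirst)
      rw [hends, hpred, hsucc, Nat.cast_succ, hfirst, Nat.cast_zero, zero_sub]
      linarith [pathBarrier_zero_add_three_le hr0 hrn]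
    have hpred : (pathPred i : ℕ) = (i : ℕ) - 1 := rfl
    by_cases hlast : (i : ℕ) = n - 1
    · have hsucc : pathSucc i = i := Fin.ext (by simp only [pathSucc]; omega)
      have hends : pathEnds ℝ n i = 1 := if_pos (Or.inr hlast)
      have hcast : (i : ℝ) = n - 1 := by rw [hlast, Nat.cast_pred (by omega)]
      rw [hends, hsucc, hpred, Nat.cast_pred (by omega), hcast, sub_add_cancel]
      linarith [pathBarrier_last_add_three_le hr0 hrn]
    · have hsucc : (pathSucc i : ℕ) = (i : ℕ) + 1 := by simp only [pathSucc]; omega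
      have hends : pathEnds ℝ n i = 0 := if_neg (by omega)
      rw [hends, hpred, hsucc, Nat.cast_pred (by omega), Nat.cast_succ, mul_zero, zero_add]
  have hstep := pathBarrier_sub_one_add_add_le hr hr' hrr' (x := i) (N := n) (by positivity)
    (by linarith)
  rw [lazyPathWalk_mulVec hn]
  linarith

lemma le_smul_pathBarrier (hn : 2 ≤ n) {κ : ℝ} (hκ : 0 ≤ κ) {x : ℕ → Fin n → ℝ} (hx0 : x 0 = 0)
    (hx : ∀ s, x (s + 1) = κ • pathEnds ℝ n + lazyPathWalk ℝ n *ᵥ x s) {t : ℕ} (ht : t ≤ n ^ 2)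
    (i : Fin n) : x t i ≤ κ * pathBarrier n √((t : ℝ) + 1) i := by
  let f (s : ℕ) : Fin n → ℝ := κ • fun j : Fin n => pathBarrier n √((s : ℝ) + 1) j
  have hf (s : ℕ) (hs : s < t) : κ • pathEnds ℝ n + lazyPathWalk ℝ n *ᵥ f s ≤ f (s + 1) := by
    have hr : 1 ≤ √((s : ℝ) + 1) := by simp
    have hrn : √((s : ℝ) + 1) ≤ n := by
      rw [Real.sqrt_le_left (by positivity)]; exact_mod_cast (by omega : s + 1 ≤ n ^ 2)
    have hrr' : √(((s + 1 : ℕ) : ℝ) + 1) ^ 2 = √((s : ℝ) + 1) ^ 2 + 1 := by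
      rw [Real.sq_sqrt (by positivity), Real.sq_sqrt (by positivity)]; push_cast; ring
    rw [mulVec_smul, ← smul_add]
    exact smul_le_smul_of_nonneg_left
      (fun i => pathEnds_add_mulVec_pathBarrier_le hn hr hrn (Real.sqrt_nonneg _) hrr' i) hκ
  have h0 : x 0 ≤ f 0 := fun j => by
    rw [hx0]; exact mul_nonneg hκ (pathBarrier_nonneg (Real.sqrt_nonneg _))
  exact le_of_supersolution lazyPathWalk_nonneg hx h0 hf t le_rfl i

end LazyPathWalk

/-- Lemma 2.2 of the paper: with `δ_0 = 0` and `δ_{t+1} = v + P·δ_t`, where `P`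
is the lazy reflecting walk transition matrix on the path with `n` vertices and
`v = (κ, 0, …, 0, κ)ᵀ`, there is an absolute constant `c₂ > 0` such that
`δ_{i,t} ≤ c₂·κ·√t` for all `i` and all `t ≤ n²`. -/
theorem stmt_14 : ∃ c₂ : ℝ, 0 < c₂ ∧
    ∀ (n : ℕ) (κ : ℚ), 0 < κ →
    ∀ (P : Matrix (Fin n) (Fin n) ℚ),
    (∀ i j : Fin n, P i j =
      if ((i : ℕ) = 0 ∧ (j : ℕ) = 0) ∨ ((i : ℕ) = n - 1 ∧ (j : ℕ) = n - 1) then (2/3 : ℚ)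
      else if (i : ℕ) ≤ (j : ℕ) + 1 ∧ (j : ℕ) ≤ (i : ℕ) + 1 then (1/3 : ℚ) else 0) →
    ∀ (v : Fin n → ℚ),
    (∀ i : Fin n, v i = if (i : ℕ) = 0 ∨ (i : ℕ) = n - 1 then κ else 0) →
    ∀ (δ : ℕ → Fin n → ℚ), δ 0 = 0 → (∀ t, δ (t + 1) = v + P.mulVec (δ t)) →
    ∀ (t : ℕ), t ≤ n ^ 2 → ∀ i : Fin n,
      (δ t i : ℝ) ≤ c₂ * (κ : ℝ) * Real.sqrt t := by
  refine ⟨24, by norm_num, fun n κ hκ P hP v hv δ hδ0 hδs t ht i => ?_⟩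
  have hκ' : (0 : ℝ) < κ := by exact_mod_cast hκ
  rcases Nat.lt_or_ge t 2 with ht2 | ht2
  · interval_cases t
    · simp [hδ0]
    · have : v i ≤ κ := by rw [hv]; split_ifs <;> linarith
      simpa [hδs, hδ0] using (show (v i : ℝ) ≤ 24 * κ by exact_mod_cast (by linarith))
  have hn : 2 ≤ n := by nlinarith
  have hv' : v = κ • pathEnds ℚ n := funext fun j => by
    rw [hv]; simp only [pathEnds, Pi.smul_apply, smul_eq_mul, mul_ite, mul_one, mul_zero]
  have hP' : P = lazyPathWalk ℚ n := Matrix.ext hP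
  have hx (s : ℕ) : Rat.castHom ℝ ∘ δ (s + 1)
      = (κ : ℝ) • pathEnds ℝ n + lazyPathWalk ℝ n *ᵥ (Rat.castHom ℝ ∘ δ s) := by
    rw [hδs, hP', hv', comp_smul_pathEnds_add_lazyPathWalk_mulVec]; rfl
  have hcmp := le_smul_pathBarrier hn hκ'.le (x := fun s => Rat.castHom ℝ ∘ δ s)
    (by ext; simp [hδ0]) hx ht i
  have hbound := pathBarrier_sqrt_le (N := n) (x := i) (t := t) (by exact_mod_cast (by omega))
    (by positivity) (by linarith [(by exact_mod_cast i.isLt : (i : ℝ) + 1 ≤ n)])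
  calc (δ t i : ℝ) ≤ κ * pathBarrier n √((t : ℝ) + 1) i := hcmp
    _ ≤ κ * (24 * √t) := by gcongr
    _ = 24 * κ * √t := by ring
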